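/- arXiv:2007.03546 — 6 statements merged into one kernel-verified Lean document; each statement's English description precedes it below -/
import Mathlib

section
/- A word w ∈ Y⁺ belongs to U_X if and only if the following three conditions hold: (i) the number of occurrences of λ in w equals the number of occurrences of ρ in w; (ii) in each initial segment (prefix) of w, the number of occurrences of λ is at least as great as the number of occurrences of ρ; (iii) the symbol λ is never immediately followed in w by the symbol ρ. -/
/-- The opening symbol λ. -/
def lam (X : Type*) : X ⊕ Bool := Sum.inr false

/-- The closing symbol ρ. -/
def rho (X : Type*) : X ⊕ Bool := Sum.inr true

/-- For a word `u`, the word `u⁻¹ = λ u ρ`. -/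
def winv {X : Type*} (u : List (X ⊕ Bool)) : List (X ⊕ Bool) :=
  [lam X] ++ u ++ [rho X]

/-- `U_X`: the least subset of `Y⁺` containing the one-letter words from `X`
and closed under concatenation and `u ↦ u⁻¹`. -/
inductive UX (X : Type*) : List (X ⊕ Bool) → Prop
  | var (x : X) : UX X [Sum.inl x]
  | mul {u v : List (X ⊕ Bool)} : UX X u → UX X v → UX X (u ++ v)
  | inv {u : List (X ⊕ Bool)} : UX X u → UX X (winv u)

/-- Test for the letter λ. -/
def isLam {X : Type*} : X ⊕ Bool → Bool
  | Sum.inr false => true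
  | _ => false

/-- Test for the letter ρ. -/
def isRho {X : Type*} : X ⊕ Bool → Bool
  | Sum.inr true => true
  | _ => false

/-! Give `λ` height `1`, `ρ` height `-1` and the letters of `X` height `0`. Conditions (i) and (ii)
say that the total height is `0` and that every prefix has nonnegative height; these, and the
absence of `λρ`, are stable under the generating operations. Conversely, a word starting with `λ`
splits at its first return to height `0` as `λ u ρ v = u⁻¹ v`, with `u`, `v` again balanced and
shorter, and `u ≠ []` because `λρ` does not occur; so induction on the
length applies. -/

theorem List.prefix_append_cases {α : Type*} {p u v : List α} (h : p <+: u ++ v) :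
    p <+: u ∨ ∃ q, q <+: v ∧ p = u ++ q := by
  rcases List.prefix_or_prefix_of_prefix h (List.prefix_append u v) with h' | ⟨q, rfl⟩
  · exact .inl h'
  · exact .inr ⟨q, (List.prefix_append_right_inj u).1 h, rfl⟩

theorem List.not_pair_infix_iff_isChain {α : Type*} {a b : α} {l : List α} :
    ¬ [a, b] <:+: l ↔ l.IsChain (fun x y => ¬(x = a ∧ y = b)) := by
  constructor
  · intro h
    refine (List.isChain_isInfix l).imp fun x y hxy ⟨hx, hy⟩ => h ?_
    rwa [hx, hy] at hxy
  · intro h hab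
    exact List.isChain_pair.1 (h.infix hab) ⟨rfl, rfl⟩

section

variable {X : Type*}

theorem exists_inl_or_eq_lam_or_eq_rho (a : X ⊕ Bool) :
    (∃ x, a = Sum.inl x) ∨ a = lam X ∨ a = rho X := by
  rcases a with x | _ | _
  exacts [.inl ⟨x, rfl⟩, .inr (.inl rfl), .inr (.inr rfl)]

def height (w : List (X ⊕ Bool)) : ℤ := w.countP isLam - w.countP isRho

@[simp] theorem height_nil : height ([] : List (X ⊕ Bool)) = 0 := rfl

@[simp] theorem height_append (u v : List (X ⊕ Bool)) :
    height (u ++ v) = height u + height v := by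
  simp only [height, List.countP_append]
  omega

@[simp] theorem height_cons_inl (x : X) (w : List (X ⊕ Bool)) :
    height (Sum.inl x :: w) = height w := by
  simp [height, isLam, isRho]

@[simp] theorem height_cons_lam (w : List (X ⊕ Bool)) : height (lam X :: w) = height w + 1 := by
  simp [height, List.countP_cons, isLam, isRho, lam]
  omega

@[simp] theorem height_cons_rho (w : List (X ⊕ Bool)) : height (rho X :: w) = height w - 1 := by
  simp [height, List.countP_cons, isLam, isRho, rho]
  omega

theorem height_cons (a : X ⊕ Bool) (w : List (X ⊕ Bool)) :
    height (a :: w) = height [a] + height w := by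
  rw [← List.singleton_append, height_append]

def IsBalanced (w : List (X ⊕ Bool)) : Prop :=
  height w = 0 ∧ ∀ p, p <+: w → 0 ≤ height p

theorem isBalanced_iff {w : List (X ⊕ Bool)} :
    IsBalanced w ↔ w.countP isLam = w.countP isRho ∧
      ∀ p : List (X ⊕ Bool), p <+: w → p.countP isRho ≤ p.countP isLam := by
  simp only [IsBalanced, height, sub_eq_zero, sub_nonneg, Nat.cast_inj, Nat.cast_le]

theorem forall_prefix_append {c : ℤ} {u v : List (X ⊕ Bool)}
    (hu : ∀ p, p <+: u → c ≤ height p) (hv : ∀ q, q <+: v → c ≤ height u + height q) :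
    ∀ p, p <+: u ++ v → c ≤ height p := by
  intro p hp
  rcases List.prefix_append_cases hp with hp | ⟨q, hq, rfl⟩
  · exact hu p hp
  · simpa using hv q hq

theorem isBalanced_singleton_inl (x : X) : IsBalanced [Sum.inl x] := by
  refine ⟨by simp, fun p hp => ?_⟩
  rcases List.prefix_cons_iff.1 hp with rfl | ⟨q, rfl, hq⟩
  · simp
  · simp [List.prefix_nil.1 hq]

theorem IsBalanced.append {u v : List (X ⊕ Bool)} (hu : IsBalanced u) (hv : IsBalanced v) :
    IsBalanced (u ++ v) :=
  ⟨by simp [hu.1, hv.1], forall_prefix_append hu.2 fun q hq => by simpa [hu.1] using hv.2 q hq⟩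

theorem isBalanced_winv {u : List (X ⊕ Bool)} (hu : IsBalanced u) : IsBalanced (winv u) := by
  have hw : winv u = lam X :: (u ++ [rho X]) := rfl
  refine ⟨by simp [hw, hu.1], fun p hp => ?_⟩
  rw [hw] at hp
  rcases List.prefix_cons_iff.1 hp with rfl | ⟨q, rfl, hq⟩
  · simp
  rcases List.prefix_concat_iff.1 hq with rfl | hq
  · simp [hu.1]
  · simpa using (hu.2 q hq).trans (Int.le_add_one le_rfl)

theorem IsBalanced.right_of_append {u v : List (X ⊕ Bool)} (huv : IsBalanced (u ++ v))
    (hu : IsBalanced u) : IsBalanced v := by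
  refine ⟨by simpa [hu.1] using huv.1, fun q hq => ?_⟩
  simpa [hu.1] using huv.2 (u ++ q) ((List.prefix_append_right_inj u).2 hq)

theorem IsBalanced.rho_notMem_head? {w : List (X ⊕ Bool)} (hw : IsBalanced w) :
    rho X ∉ w.head? := by
  intro h
  obtain ⟨t, rfl⟩ := List.head?_eq_some_iff.1 h
  simpa using hw.2 [rho X] (List.cons_prefix_cons.2 ⟨rfl, List.nil_prefix⟩)

theorem IsBalanced.lam_notMem_getLast? {w : List (X ⊕ Bool)} (hw : IsBalanced w) :
    lam X ∉ w.getLast? := by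
  intro h
  obtain ⟨u, rfl⟩ := List.getLast?_eq_some_iff.1 h
  have hu := hw.2 u (List.prefix_append u _)
  have hsum := hw.1
  simp at hsum
  omega

/-- `u ρ` is the shortest prefix of height below `c`. The threshold `c` is generalized so that the
induction can peel off a first letter `a`, the threshold becoming `c - height [a]`. -/
theorem exists_eq_append_rho_cons (t : List (X ⊕ Bool)) {c : ℤ} (hc : c ≤ 0)
    (ht : height t < c) :
    ∃ u v, t = u ++ rho X :: v ∧ height u = c ∧ ∀ p, p <+: u → c ≤ height p := by
  induction t generalizing c with
  | nil => simp at ht; omega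
  | cons a t ih =>
    by_cases ha : a = rho X ∧ c = 0
    · obtain ⟨rfl, rfl⟩ := ha
      exact ⟨[], t, rfl, rfl, fun p hp => by simp [List.prefix_nil.1 hp]⟩
    have hc' : c - height [a] ≤ 0 := by
      obtain ⟨x, rfl⟩ | rfl | rfl := exists_inl_or_eq_lam_or_eq_rho a <;> simp at ha ⊢ <;>
        omega
    rw [height_cons] at ht
    obtain ⟨u, v, rfl, hu, hpre⟩ := ih hc' (by omega)
    refine ⟨a :: u, v, rfl, by rw [height_cons]; omega, fun p hp => ?_⟩
    rcases List.prefix_cons_iff.1 hp with rfl | ⟨q, rfl, hq⟩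
    · simpa using hc
    · have := hpre q hq
      rw [height_cons]
      omega

theorem IsBalanced.exists_eq_winv_append {t : List (X ⊕ Bool)} (h : IsBalanced (lam X :: t)) :
    ∃ u v, lam X :: t = winv u ++ v ∧ IsBalanced u ∧ IsBalanced v := by
  obtain ⟨u, v, rfl, hu, hpre⟩ :=
    exists_eq_append_rho_cons t le_rfl (by have := h.1; simp at this; omega)
  have hw : lam X :: (u ++ rho X :: v) = winv u ++ v := by simp [winv]
  have hub : IsBalanced u := ⟨hu, hpre⟩
  exact ⟨u, v, hw, hub, (hw ▸ h).right_of_append (isBalanced_winv hub)⟩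

theorem UX.ne_nil {w : List (X ⊕ Bool)} (h : UX X w) : w ≠ [] := by
  induction h with
  | var x => simp
  | mul _ _ ihu _ => simp [ihu]
  | inv _ _ => simp [winv]

theorem UX.isBalanced {w : List (X ⊕ Bool)} (h : UX X w) : IsBalanced w := by
  induction h with
  | var x => exact isBalanced_singleton_inl x
  | mul _ _ ihu ihv => exact ihu.append ihv
  | inv _ ihu => exact isBalanced_winv ihu

theorem UX.isChain {w : List (X ⊕ Bool)} (h : UX X w) :
    w.IsChain (fun x y => ¬(x = lam X ∧ y = rho X)) := by
  induction h with
  | var x => exact List.isChain_singleton _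
  | mul _ hv ihu ihv =>
    exact ihu.append ihv fun _ _ y hy hxy => hv.isBalanced.rho_notMem_head? (hxy.2 ▸ hy)
  | @inv u hu ihu =>
    obtain ⟨a, t, rfl⟩ := List.exists_cons_of_ne_nil hu.ne_nil
    have hw : winv (a :: t) = [lam X] ++ (a :: t ++ [rho X]) := rfl
    rw [hw]
    refine (List.isChain_singleton _).append (ihu.append (List.isChain_singleton _) ?_) ?_
    · intro x hx _ _ hxy
      exact hu.isBalanced.lam_notMem_getLast? (hxy.1 ▸ hx)
    · intro _ _ y hy hxy
      exact hu.isBalanced.rho_notMem_head? (by simpa [hxy.2] using hy)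

theorem UX.of_isBalanced {w : List (X ⊕ Bool)} (hne : w ≠ []) (hb : IsBalanced w)
    (hc : w.IsChain (fun x y => ¬(x = lam X ∧ y = rho X))) : UX X w := by
  induction hlen : w.length using Nat.strong_induction_on generalizing w with
  | _ n ih =>
  obtain _ | ⟨a, t⟩ := w
  · contradiction
  obtain ⟨x, rfl⟩ | rfl | rfl := exists_inl_or_eq_lam_or_eq_rho a
  · by_cases ht : t = []
    · subst ht
      exact .var x
    · have htb : IsBalanced t := hb.right_of_append (u := [Sum.inl x]) (isBalanced_singleton_inl x)
      exact .mul (.var x) (ih _ (by simp [← hlen]) ht htb hc.tail rfl)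
  · obtain ⟨u, v, huv, hu, hv⟩ := hb.exists_eq_winv_append
    rw [huv] at hlen hc ⊢
    have hune : u ≠ [] := by
      rintro rfl
      exact (List.isChain_cons_cons.1 hc).1 ⟨rfl, rfl⟩
    have hlen' : u.length + v.length + 2 = n := by simp [winv] at hlen; omega
    have UXu : UX X u :=
      ih _ (by omega) hune hu hc.left_of_append.tail.left_of_append rfl
    by_cases hvn : v = []
    · subst hvn
      simpa using UXu.inv
    · exact .mul UXu.inv (ih _ (by omega) hvn hv hc.right_of_append rfl)
  · exact (hb.rho_notMem_head? rfl).elim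

end

theorem stmt0 {X : Type*} (w : List (X ⊕ Bool)) (hw : w ≠ []) :
    UX X w ↔
      (w.countP isLam = w.countP isRho ∧
       (∀ p : List (X ⊕ Bool), p <+: w → p.countP isRho ≤ p.countP isLam) ∧
       ¬ ([lam X, rho X] <:+: w)) := by
  rw [List.not_pair_infix_iff_isChain]
  constructor
  · intro h
    obtain ⟨hcount, hprefix⟩ := isBalanced_iff.1 h.isBalanced
    exact ⟨hcount, hprefix, h.isChain⟩
  · rintro ⟨hcount, hprefix, hchain⟩
    exact UX.of_isBalanced hw (isBalanced_iff.2 ⟨hcount, hprefix⟩) hchain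
end

section
/- Every element w of U_X can be expressed uniquely as a concatenation w = w₁w₂⋯wₘ of irreducible elements w₁, …, wₘ of U_X, where an element of U_X is called irreducible if it is not the concatenation of two elements of U_X. -/
/-- An element of `U_X` is irreducible if it is not the concatenation
of two elements of `U_X`. -/
def IrreducibleWord {X : Type*} (w : List (X ⊕ Bool)) : Prop :=
  UX X w ∧ ¬ ∃ u v : List (X ⊕ Bool), UX X u ∧ UX X v ∧ w = u ++ v


/-!
Count `λ` as `+1`, `ρ` as `-1` and letters of `X` as `0`. Every word of `U_X` is a balanced
bracket word: its balance is `0` and no prefix has negative balance. Hence a proper nonempty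
prefix of `λ u ρ` has positive balance and is not in `U_X`; as the irreducible elements are
exactly the letters and the words `λ u ρ`, no element of `U_X` is a proper prefix of an
irreducible one. The irreducible elements thus form a prefix code, and factorizations over a
prefix code are unique; existence is an induction on `U_X`.
-/

namespace List

variable {α : Type*}

theorem prefix_or_eq_append_of_prefix_append {p u v : List α} (h : p <+: u ++ v) :
    p <+: u ∨ ∃ q, p = u ++ q ∧ q <+: v := by
  rcases prefix_or_prefix_of_prefix h (prefix_append u v) with hpu | ⟨q, rfl⟩
  · exact Or.inl hpu
  · exact Or.inr ⟨q, rfl, (prefix_append_right_inj u).mp h⟩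

theorem eq_of_flatten_eq_of_prefix_code {S : List α → Prop} (hne : ∀ a, S a → a ≠ [])
    (hcode : ∀ a b, S a → S b → a <+: b → a = b) :
    ∀ {l l' : List (List α)}, (∀ a ∈ l, S a) → (∀ a ∈ l', S a) →
      l.flatten = l'.flatten → l = l'
  | [], [], _, _, _ => rfl
  | [], a :: _, _, hl', h =>
    absurd (flatten_eq_nil_iff.mp h.symm a mem_cons_self) (hne a (hl' a mem_cons_self))
  | a :: _, [], hl, _, h =>
    absurd (flatten_eq_nil_iff.mp h a mem_cons_self) (hne a (hl a mem_cons_self))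
  | a :: t, a' :: t', hl, hl', h => by
    simp only [forall_mem_cons, flatten_cons] at hl hl' h
    have ha : a = a' := by
      rcases prefix_or_prefix_of_prefix (h ▸ prefix_append a t.flatten) (prefix_append a' _)
        with h' | h'
      · exact hcode a a' hl.1 hl'.1 h'
      · exact (hcode a' a hl'.1 hl.1 h').symm
    subst ha
    rw [eq_of_flatten_eq_of_prefix_code hne hcode hl.2 hl'.2 (append_cancel_left h)]

end List

section

variable {X : Type*}

def bracketBalance (w : List (X ⊕ Bool)) : ℤ :=
  (w.map (Sum.elim (fun _ => 0) fun b => if b then -1 else 1)).sum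

@[simp]
theorem bracketBalance_append (u v : List (X ⊕ Bool)) :
    bracketBalance (u ++ v) = bracketBalance u + bracketBalance v := by
  simp [bracketBalance]

@[simp]
theorem bracketBalance_lam_cons (u : List (X ⊕ Bool)) :
    bracketBalance (lam X :: u) = 1 + bracketBalance u := by
  simp [bracketBalance, lam]

@[simp]
theorem bracketBalance_rho : bracketBalance [rho X] = -1 := by
  simp [bracketBalance, rho]

namespace UX

theorem ne_nil_s2 {w : List (X ⊕ Bool)} (hw : UX X w) : w ≠ [] := by
  induction hw <;> simp_all [winv]

theorem bracketBalance_eq_zero {w : List (X ⊕ Bool)} (hw : UX X w) : bracketBalance w = 0 := by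
  induction hw with
  | var x => simp [bracketBalance]
  | mul _ _ ihu ihv => rw [bracketBalance_append, ihu, ihv, add_zero]
  | inv _ ih => simp [winv, ih]

theorem bracketBalance_nonneg_of_prefix {w p : List (X ⊕ Bool)} (hw : UX X w) (hp : p <+: w) :
    0 ≤ bracketBalance p := by
  induction hw generalizing p with
  | var x =>
    rcases List.prefix_cons_iff.mp hp with rfl | ⟨t, rfl, ht⟩
    · simp [bracketBalance]
    · simp [List.prefix_nil.mp ht, bracketBalance]
  | mul hu _ ihu ihv =>
    rcases List.prefix_or_eq_append_of_prefix_append hp with hpu | ⟨q, rfl, hq⟩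
    · exact ihu hpu
    · rw [bracketBalance_append, hu.bracketBalance_eq_zero, zero_add]
      exact ihv hq
  | inv hu ih =>
    rcases List.prefix_cons_iff.mp hp with rfl | ⟨q, rfl, hq⟩
    · simp [bracketBalance]
    rcases List.prefix_concat_iff.mp hq with rfl | hqu
    · simp [hu.bracketBalance_eq_zero]
    · have hq_nonneg := ih hqu
      rw [bracketBalance_lam_cons]
      omega

theorem eq_singleton_of_prefix {p : List (X ⊕ Bool)} {a : X ⊕ Bool} (hp : UX X p)
    (hpa : p <+: [a]) : p = [a] := by
  rcases List.prefix_cons_iff.mp hpa with rfl | ⟨t, rfl, ht⟩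
  · exact absurd rfl hp.ne_nil_s2
  · rw [List.prefix_nil.mp ht]

/-- The opening `λ` of `u⁻¹` is closed only by its final `ρ`. -/
theorem eq_winv_of_prefix {u p : List (X ⊕ Bool)} (hu : UX X u) (hp : UX X p)
    (hpu : p <+: winv u) : p = winv u := by
  rcases List.prefix_cons_iff.mp hpu with rfl | ⟨q, rfl, hq⟩
  · exact absurd rfl hp.ne_nil_s2
  rcases List.prefix_concat_iff.mp hq with rfl | hqu
  · rfl
  · have hq_nonneg := hu.bracketBalance_nonneg_of_prefix hqu
    have hp_zero := hp.bracketBalance_eq_zero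
    rw [bracketBalance_lam_cons] at hp_zero
    omega

end UX

theorem irreducibleWord_iff {w : List (X ⊕ Bool)} :
    IrreducibleWord w ↔ UX X w ∧ ∀ p, UX X p → p <+: w → p = w := by
  constructor
  · rintro ⟨hw, hsplit⟩
    refine ⟨hw, fun p hp hpw => ?_⟩
    cases hw with
    | var x => exact hp.eq_singleton_of_prefix hpw
    | mul hu hv => exact absurd ⟨_, _, hu, hv, rfl⟩ hsplit
    | inv hu => exact hu.eq_winv_of_prefix hp hpw
  · rintro ⟨hw, hmin⟩
    refine ⟨hw, fun ⟨u, v, hu, hv, huv⟩ => hv.ne_nil_s2 ?_⟩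
    have := hmin u hu (huv ▸ List.prefix_append u v)
    simpa [this] using huv

theorem IrreducibleWord.eq_of_prefix {p w : List (X ⊕ Bool)} (hp : IrreducibleWord p)
    (hw : IrreducibleWord w) (hpw : p <+: w) : p = w :=
  (irreducibleWord_iff.mp hw).2 p hp.1 hpw

theorem irreducibleWord_singleton (x : X) : IrreducibleWord [Sum.inl x] :=
  irreducibleWord_iff.mpr ⟨UX.var x, fun _ hp => hp.eq_singleton_of_prefix⟩

theorem UX.irreducibleWord_winv {u : List (X ⊕ Bool)} (hu : UX X u) :
    IrreducibleWord (winv u) :=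
  irreducibleWord_iff.mpr ⟨hu.inv, fun _ => hu.eq_winv_of_prefix⟩

theorem UX.exists_irreducible_factorization {w : List (X ⊕ Bool)} (hw : UX X w) :
    ∃ l : List (List (X ⊕ Bool)), l.flatten = w ∧ ∀ p ∈ l, IrreducibleWord p := by
  induction hw with
  | var x => exact ⟨[[Sum.inl x]], by simp, by simpa using irreducibleWord_singleton x⟩
  | mul _ _ ihu ihv =>
    obtain ⟨lu, rfl, hlu⟩ := ihu
    obtain ⟨lv, rfl, hlv⟩ := ihv
    exact ⟨lu ++ lv, List.flatten_append, by simpa [or_imp, forall_and] using ⟨hlu, hlv⟩⟩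
  | @inv u hu => exact ⟨[winv u], by simp, by simpa using hu.irreducibleWord_winv⟩

end

theorem stmt2 {X : Type*} {w : List (X ⊕ Bool)} (hw : UX X w) :
    ∃! l : List (List (X ⊕ Bool)),
      l.flatten = w ∧ ∀ p ∈ l, IrreducibleWord p := by
  obtain ⟨l, hl, hirr⟩ := hw.exists_irreducible_factorization
  refine ⟨l, ⟨hl, hirr⟩, fun l' ⟨hl', hirr'⟩ => ?_⟩
  exact List.eq_of_flatten_eq_of_prefix_code (fun _ hp => hp.1.ne_nil_s2)
    (fun _ _ => IrreducibleWord.eq_of_prefix) hirr' hirr (hl'.trans hl.symm)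
end

section
/- The quotient CR_X = U_X/ζ, with the multiplication and unary operation induced from U_X, is a completely regular semigroup, and it is a free completely regular semigroup on X: for every completely regular semigroup S and every function f : X → S there exists a unique function F : U_X/ζ → S preserving multiplication and the unary operation such that F(xζ) = f(x) for every x ∈ X. -/
/-- Elements of `U_X` as a type. -/
def UWord (X : Type*) := {w : List (X ⊕ Bool) // UX X w}

/-- Concatenation on `U_X`. -/
def umul {X : Type*} (u v : UWord X) : UWord X := ⟨u.1 ++ v.1, UX.mul u.2 v.2⟩

/-- The unary operation `u ↦ u⁻¹` on `U_X`. -/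
def uinv {X : Type*} (u : UWord X) : UWord X := ⟨winv u.1, UX.inv u.2⟩

/-- `ζ`: the least equivalence relation on `U_X` containing the pairs
`(w, w w⁻¹ w)`, `(w, (w⁻¹)⁻¹)`, `(w w⁻¹, w⁻¹ w)` and compatible with
concatenation and the unary operation. -/
inductive zeta (X : Type*) : UWord X → UWord X → Prop
  | cr1 (w : UWord X) : zeta X w (umul (umul w (uinv w)) w)
  | cr2 (w : UWord X) : zeta X w (uinv (uinv w))
  | cr3 (w : UWord X) : zeta X (umul w (uinv w)) (umul (uinv w) w)
  | refl (w : UWord X) : zeta X w w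
  | symm {u v : UWord X} : zeta X u v → zeta X v u
  | trans {u v w : UWord X} : zeta X u v → zeta X v w → zeta X u w
  | mul {u u' v v' : UWord X} : zeta X u u' → zeta X v v' →
      zeta X (umul u v) (umul u' v')
  | inv {u v : UWord X} : zeta X u v → zeta X (uinv u) (uinv v)


/-! Since `U_X` is a set of words rather than a term algebra, a word cannot be evaluated in a
completely regular semigroup `S` by recursion on how it was built. Instead it is read from left to
right by a deterministic stack machine; induction on `UX` shows that the machine returns the
expected value on every word of `U_X`. The resulting evaluation is multiplicative, commutes with
`⁻¹` and, by the identities of `S`, is constant on `ζ`-classes; uniqueness of the induced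
homomorphism is again induction on `UX`. -/

structure IsCompletelyRegular {S : Type*} [Mul S] (inv : S → S) : Prop where
  mul_inv_mul_self : ∀ a, a * inv a * a = a
  inv_inv : ∀ a, inv (inv a) = a
  mul_inv_comm : ∀ a, a * inv a = inv a * a

section Evaluation

variable {X S : Type*} [Semigroup S] (sinv : S → S) (f : X → S)

def optMul : Option S → S → S
  | none, s => s
  | some a, s => a * s

theorem optMul_mul (o : Option S) (a b : S) : optMul o (a * b) = optMul o a * b := by
  cases o <;> simp [optMul, mul_assoc]

/-- The top frame holds the product of the factors already read at the current nesting depth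
(`none` if there are none yet); `λ` opens a new frame and `ρ` closes it, multiplying the frame
below by `sinv` of its content. -/
def evalStep : List (Option S) → X ⊕ Bool → Option (List (Option S))
  | o :: rest, Sum.inl x => some (some (optMul o (f x)) :: rest)
  | st, Sum.inr false => some (none :: st)
  | some a :: o :: rest, Sum.inr true => some (some (optMul o (sinv a)) :: rest)
  | _, _ => none

def evalStack (st : List (Option S)) (w : List (X ⊕ Bool)) : Option (List (Option S)) :=
  w.foldlM (evalStep sinv f) st

theorem evalStack_append (st : List (Option S)) (u v : List (X ⊕ Bool)) :
    evalStack sinv f st (u ++ v) = (evalStack sinv f st u).bind (evalStack sinv f · v) :=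
  List.foldlM_append

theorem UX.exists_evalStack {w : List (X ⊕ Bool)} (hw : UX X w) :
    ∃ s : S, ∀ o rest, evalStack sinv f (o :: rest) w = some (some (optMul o s) :: rest) := by
  induction hw with
  | var x => exact ⟨f x, fun o rest => rfl⟩
  | mul _ _ ihu ihv =>
    obtain ⟨su, hsu⟩ := ihu
    obtain ⟨sv, hsv⟩ := ihv
    refine ⟨su * sv, fun o rest => ?_⟩
    simp only [evalStack_append, hsu, Option.bind_some, hsv, optMul_mul]
    rfl
  | inv _ ih =>
    obtain ⟨s, hs⟩ := ih
    refine ⟨sinv s, fun o rest => ?_⟩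
    have hlam : evalStack sinv f (o :: rest) [lam X] = some (none :: o :: rest) := rfl
    simp only [winv, evalStack_append, hlam, Option.bind_some, hs]
    rfl

noncomputable def evalWord (u : UWord X) : S :=
  Classical.choose (u.2.exists_evalStack sinv f)

theorem evalStack_evalWord (u : UWord X) (o : Option S) (rest : List (Option S)) :
    evalStack sinv f (o :: rest) u.1 = some (some (optMul o (evalWord sinv f u)) :: rest) :=
  Classical.choose_spec (u.2.exists_evalStack sinv f) o rest

theorem evalWord_eq_of_evalStack {u : UWord X} {s : S}
    (h : ∀ o rest, evalStack sinv f (o :: rest) u.1 = some (some (optMul o s) :: rest)) :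
    evalWord sinv f u = s := by
  simpa [optMul, evalStack_evalWord] using h none []

theorem evalWord_umul (u v : UWord X) :
    evalWord sinv f (umul u v) = evalWord sinv f u * evalWord sinv f v :=
  evalWord_eq_of_evalStack sinv f fun o rest => by
    simp only [umul, evalStack_append, evalStack_evalWord, Option.bind_some, optMul_mul]
    rfl

theorem evalWord_uinv (u : UWord X) :
    evalWord sinv f (uinv u) = sinv (evalWord sinv f u) :=
  evalWord_eq_of_evalStack sinv f fun o rest => by
    have hlam : evalStack sinv f (o :: rest) [lam X] = some (none :: o :: rest) := rfl
    simp only [uinv, winv, evalStack_append, hlam, Option.bind_some, evalStack_evalWord]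
    rfl

theorem evalWord_var (x : X) : evalWord sinv f ⟨[Sum.inl x], UX.var x⟩ = f x :=
  evalWord_eq_of_evalStack sinv f fun _ _ => rfl

theorem zeta.evalWord_eq (hS : IsCompletelyRegular sinv) {u v : UWord X} (h : zeta X u v) :
    evalWord sinv f u = evalWord sinv f v := by
  induction h with
  | cr1 w => simp [evalWord_umul, evalWord_uinv, hS.mul_inv_mul_self]
  | cr2 w => simp [evalWord_uinv, hS.inv_inv]
  | cr3 w => simp [evalWord_umul, evalWord_uinv, hS.mul_inv_comm]
  | refl w => rfl
  | symm _ ih => exact ih.symm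
  | trans _ _ ih₁ ih₂ => exact ih₁.trans ih₂
  | mul _ _ ih₁ ih₂ => simp [evalWord_umul, ih₁, ih₂]
  | inv _ ih => simp [evalWord_uinv, ih]

end Evaluation

def FreeCR (X : Type*) := Quot (zeta X)

namespace FreeCR

variable {X : Type*}

def mk : UWord X → FreeCR X := Quot.mk _

def of (x : X) : FreeCR X := mk ⟨[Sum.inl x], UX.var x⟩

instance : Mul (FreeCR X) :=
  ⟨Quot.map₂ umul (fun _ _ _ h => .mul (.refl _) h) (fun _ _ _ h => .mul h (.refl _))⟩

instance : Inv (FreeCR X) := ⟨Quot.map uinv fun _ _ => .inv⟩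

theorem mk_mul_mk (u v : UWord X) : mk u * mk v = mk (umul u v) := rfl

theorem inv_mk (u : UWord X) : (mk u)⁻¹ = mk (uinv u) := rfl

@[elab_as_elim]
theorem induction_on {p : FreeCR X → Prop} (a : FreeCR X) (h : ∀ u, p (mk u)) : p a :=
  Quot.ind h a

instance : Semigroup (FreeCR X) where
  mul_assoc a b c := induction_on a fun u => induction_on b fun v => induction_on c fun w =>
    congrArg mk (Subtype.ext (List.append_assoc u.1 v.1 w.1))

theorem isCompletelyRegular : IsCompletelyRegular (fun a : FreeCR X => a⁻¹) where
  mul_inv_mul_self a := induction_on a fun u => (Quot.sound (zeta.cr1 u)).symm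
  inv_inv a := induction_on a fun u => (Quot.sound (zeta.cr2 u)).symm
  mul_inv_comm a := induction_on a fun u => Quot.sound (zeta.cr3 u)

section lift

variable {S : Type*} [Semigroup S] {sinv : S → S} (hS : IsCompletelyRegular sinv) (f : X → S)

noncomputable def lift : FreeCR X → S :=
  Quot.lift (evalWord sinv f) fun _ _ h => h.evalWord_eq sinv f hS

theorem lift_mul (a b : FreeCR X) : lift hS f (a * b) = lift hS f a * lift hS f b :=
  induction_on a fun u => induction_on b fun v => evalWord_umul sinv f u v

theorem lift_inv (a : FreeCR X) : lift hS f a⁻¹ = sinv (lift hS f a) :=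
  induction_on a fun u => evalWord_uinv sinv f u

theorem lift_of (x : X) : lift hS f (of x) = f x := evalWord_var sinv f x

end lift

theorem hom_ext {S : Type*} [Mul S] {sinv : S → S} {F G : FreeCR X → S}
    (hF_mul : ∀ a b, F (a * b) = F a * F b) (hF_inv : ∀ a, F a⁻¹ = sinv (F a))
    (hG_mul : ∀ a b, G (a * b) = G a * G b) (hG_inv : ∀ a, G a⁻¹ = sinv (G a))
    (h_of : ∀ x, F (of x) = G (of x)) : F = G := by
  funext a
  induction a using induction_on with | h u => ?_
  obtain ⟨w, hw⟩ := u
  induction hw with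
  | var x => exact h_of x
  | mul hu hv ihu ihv =>
    exact (hF_mul (mk ⟨_, hu⟩) (mk ⟨_, hv⟩)).trans <|
      (congrArg₂ (· * ·) ihu ihv).trans (hG_mul _ _).symm
  | inv hu ih =>
    exact (hF_inv (mk ⟨_, hu⟩)).trans <| (congrArg sinv ih).trans (hG_inv _).symm

end FreeCR

/-- `CR_X = U_X/ζ`, with the induced operations, is a free completely regular
semigroup on `X`. -/
theorem stmt4 {X : Type*} :
    ∃ (qmul : Quot (zeta X) → Quot (zeta X) → Quot (zeta X))
      (qinv : Quot (zeta X) → Quot (zeta X)),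
      -- the operations are induced from `U_X`
      (∀ u v : UWord X, qmul (Quot.mk _ u) (Quot.mk _ v) = Quot.mk _ (umul u v)) ∧
      (∀ u : UWord X, qinv (Quot.mk _ u) = Quot.mk _ (uinv u)) ∧
      -- `U_X/ζ` is a completely regular semigroup
      (∀ a b c : Quot (zeta X), qmul (qmul a b) c = qmul a (qmul b c)) ∧
      (∀ a : Quot (zeta X), qmul (qmul a (qinv a)) a = a) ∧
      (∀ a : Quot (zeta X), qinv (qinv a) = a) ∧
      (∀ a : Quot (zeta X), qmul a (qinv a) = qmul (qinv a) a) ∧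
      -- and it is free on `X` among completely regular semigroups
      (∀ (S : Type) [Semigroup S] (sinv : S → S),
        (∀ a : S, a * sinv a * a = a) →
        (∀ a : S, sinv (sinv a) = a) →
        (∀ a : S, a * sinv a = sinv a * a) →
        ∀ f : X → S, ∃! F : Quot (zeta X) → S,
          (∀ a b : Quot (zeta X), F (qmul a b) = F a * F b) ∧
          (∀ a : Quot (zeta X), F (qinv a) = sinv (F a)) ∧
          (∀ x : X, F (Quot.mk _ (⟨[Sum.inl x], UX.var x⟩ : UWord X)) = f x)) := by
  have hCR := FreeCR.isCompletelyRegular (X := X)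
  refine ⟨((· * ·) : FreeCR X → FreeCR X → FreeCR X), ((·⁻¹) : FreeCR X → FreeCR X),
    FreeCR.mk_mul_mk, FreeCR.inv_mk, mul_assoc (G := FreeCR X), hCR.mul_inv_mul_self, hCR.inv_inv,
    hCR.mul_inv_comm, fun S _ sinv h₁ h₂ h₃ f => ?_⟩
  have hS : IsCompletelyRegular sinv := ⟨h₁, h₂, h₃⟩
  refine ⟨FreeCR.lift hS f, ⟨FreeCR.lift_mul hS f, FreeCR.lift_inv hS f, FreeCR.lift_of hS f⟩, ?_⟩
  rintro G ⟨hG_mul, hG_inv, hG_of⟩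
  exact FreeCR.hom_ext hG_mul hG_inv (FreeCR.lift_mul hS f) (FreeCR.lift_inv hS f)
    fun x => (hG_of x).trans (FreeCR.lift_of hS f x).symm
end

section
/- If u, v ∈ U_X and u ζ v, then ū ζ v̄. In particular, writing w⁰ = w w⁻¹, one has that the mirror image of w⁰ is ζ-related to (w̄)⁰ for every w ∈ U_X. -/
/-- The letter map φ fixing `X` and interchanging λ and ρ. -/
def phi {X : Type*} : X ⊕ Bool → X ⊕ Bool
  | Sum.inl x => Sum.inl x
  | Sum.inr b => Sum.inr (!b)

/-- The mirror image of a word: `y₁⋯yₙ ↦ φ(yₙ)⋯φ(y₁)`. -/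
def mirror {X : Type*} (w : List (X ⊕ Bool)) : List (X ⊕ Bool) :=
  (w.map phi).reverse

lemma mirror_append {X : Type*} (u v : List (X ⊕ Bool)) :
    mirror (u ++ v) = mirror v ++ mirror u := by
  simp [mirror]

lemma mirror_winv {X : Type*} (u : List (X ⊕ Bool)) :
    mirror (winv u) = winv (mirror u) := by
  simp [mirror, winv, lam, rho, phi]

lemma UX.mirror {X : Type*} {w : List (X ⊕ Bool)} (h : UX X w) : UX X (mirror w) := by
  induction h with
  | var x => exact UX.var x
  | mul _ _ ihu ihv => rw [mirror_append]; exact UX.mul ihv ihu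
  | inv _ ih => rw [mirror_winv]; exact UX.inv ih

def umirror {X : Type*} (w : UWord X) : UWord X := ⟨mirror w.1, w.2.mirror⟩

lemma umirror_umul {X : Type*} (u v : UWord X) :
    umirror (umul u v) = umul (umirror v) (umirror u) :=
  Subtype.ext (mirror_append u.1 v.1)

lemma umirror_uinv {X : Type*} (u : UWord X) : umirror (uinv u) = uinv (umirror u) :=
  Subtype.ext (mirror_winv u.1)

lemma umul_assoc {X : Type*} (u v w : UWord X) :
    umul (umul u v) w = umul u (umul v w) :=
  Subtype.ext (List.append_assoc u.1 v.1 w.1)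

lemma zeta_umirror {X : Type*} {u v : UWord X} (h : zeta X u v) :
    zeta X (umirror u) (umirror v) := by
  induction h with
  | cr1 w =>
      rw [umirror_umul, umirror_umul, umirror_uinv, ← umul_assoc]
      exact zeta.cr1 (umirror w)
  | cr2 w => rw [umirror_uinv, umirror_uinv]; exact zeta.cr2 (umirror w)
  | cr3 w =>
      rw [umirror_umul, umirror_umul, umirror_uinv]
      exact (zeta.cr3 (umirror w)).symm
  | refl w => exact zeta.refl (umirror w)
  | symm _ ih => exact ih.symm
  | trans _ _ ih₁ ih₂ => exact ih₁.trans ih₂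
  | mul _ _ ihu ihv => rw [umirror_umul, umirror_umul]; exact zeta.mul ihv ihu
  | inv _ ih => rw [umirror_uinv, umirror_uinv]; exact zeta.inv ih

/-- If `u ζ v` then `ū ζ v̄`; in particular, with `w⁰ = w w⁻¹`, the mirror image
of `w⁰` is ζ-related to `(w̄)⁰`. -/
theorem stmt7 {X : Type*} :
    (∀ u v : UWord X, zeta X u v →
      ∀ (hu : UX X (mirror u.1)) (hv : UX X (mirror v.1)),
        zeta X ⟨mirror u.1, hu⟩ ⟨mirror v.1, hv⟩) ∧
    (∀ w : UWord X,
      ∀ (h1 : UX X (mirror ((umul w (uinv w)).1))) (h2 : UX X (mirror w.1)),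
        zeta X ⟨mirror ((umul w (uinv w)).1), h1⟩
          (umul ⟨mirror w.1, h2⟩ (uinv ⟨mirror w.1, h2⟩))) := by
  refine ⟨fun _ _ h _ _ => zeta_umirror h, fun w _ _ => ?_⟩
  change zeta X (umirror (umul w (uinv w))) (umul (umirror w) (uinv (umirror w)))
  rw [umirror_umul, umirror_uinv]
  exact (zeta.cr3 (umirror w)).symm
end

section
/- Let S be a completely regular semigroup and suppose D ⊆ S is a 𝒟-class of S that is an ideal of S (s·d ∈ D and d·s ∈ D for all s ∈ S and d ∈ D); equivalently, S/𝒟 has a least element D. For P ∈ {𝓗, 𝓛, ℛ} define the relation ρ_P on S by: a ρ_P b if and only if either a = b, or a, b ∈ D and a P b. Then ρ_𝓗, ρ_𝓛 and ρ_ℛ are congruences on S with ρ_𝓗 ⊆ 𝓗, ρ_𝓛 ⊆ 𝓛 and ρ_ℛ ⊆ ℛ; moreover, for all d, e ∈ D one has (d·d) ρ_𝓗 d and (d·e·d) ρ_𝓗 d (the ρ_𝓗-classes in D form a rectangular band), (d·e) ρ_𝓛 e (the ρ_𝓛-classes in D form a right zero semigroup), and (d·e) ρ_ℛ d (the ρ_ℛ-classes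 in D form a left zero semigroup). -/
/-- Green's relation 𝓛: `a 𝓛 b` iff `{a} ∪ Sa = {b} ∪ Sb`. -/
def greenL {S : Type*} [Semigroup S] (a b : S) : Prop :=
  (insert a {x | ∃ s : S, x = s * a} : Set S) = insert b {x | ∃ s : S, x = s * b}

/-- Green's relation ℛ: `a ℛ b` iff `{a} ∪ aS = {b} ∪ bS`. -/
def greenR {S : Type*} [Semigroup S] (a b : S) : Prop :=
  (insert a {x | ∃ s : S, x = a * s} : Set S) = insert b {x | ∃ s : S, x = b * s}

/-- Green's relation 𝓗 = 𝓛 ∩ ℛ. -/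
def greenH {S : Type*} [Semigroup S] (a b : S) : Prop :=
  greenL a b ∧ greenR a b

/-- Green's relation 𝒟 = 𝓛 ∘ ℛ. -/
def greenD {S : Type*} [Semigroup S] (a b : S) : Prop :=
  ∃ c : S, greenL a c ∧ greenR c b

section aux

variable {S : Type*} [Semigroup S]

lemma greenL_symm {a b : S} (h : greenL a b) : greenL b a := Eq.symm h

lemma greenL_trans {a b c : S} (h1 : greenL a b) (h2 : greenL b c) : greenL a c :=
  Eq.trans h1 h2

lemma greenR_symm {a b : S} (h : greenR a b) : greenR b a := Eq.symm h

lemma greenR_trans {a b c : S} (h1 : greenR a b) (h2 : greenR b c) : greenR a c :=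
  Eq.trans h1 h2

lemma cr_sq {inv : S → S} (hcr1 : ∀ a : S, a * inv a * a = a)
    (hcr3 : ∀ a : S, a * inv a = inv a * a) (s : S) : s * s * inv s = s := by
  calc s * s * inv s = s * (s * inv s) := mul_assoc _ _ _
    _ = s * (inv s * s) := by rw [hcr3]
    _ = s * inv s * s := (mul_assoc _ _ _).symm
    _ = s := hcr1 s

lemma cr_sq' {inv : S → S} (hcr1 : ∀ a : S, a * inv a * a = a)
    (hcr3 : ∀ a : S, a * inv a = inv a * a) (s : S) : inv s * s * s = s := by
  rw [← hcr3]; exact hcr1 s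

lemma greenL_iff {inv : S → S} (hcr1 : ∀ a : S, a * inv a * a = a) {a b : S} :
    greenL a b ↔ (∃ s, a = s * b) ∧ (∃ t, b = t * a) := by
  constructor
  · intro h
    have hb : b ∈ (insert a {x | ∃ s : S, x = s * a} : Set S) := by
      rw [h]; exact Set.mem_insert _ _
    have ha : a ∈ (insert b {x | ∃ s : S, x = s * b} : Set S) := by
      rw [← h]; exact Set.mem_insert _ _
    constructor
    · rcases Set.mem_insert_iff.mp ha with h' | h'
      · exact ⟨a * inv a, by rw [← h']; exact (hcr1 a).symm⟩
      · exact h'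
    · rcases Set.mem_insert_iff.mp hb with h' | h'
      · exact ⟨b * inv b, by rw [← h']; exact (hcr1 b).symm⟩
      · exact h'
  · rintro ⟨⟨s, hs⟩, ⟨t, ht⟩⟩
    unfold greenL
    ext x
    simp only [Set.mem_insert_iff, Set.mem_setOf_eq]
    constructor
    · rintro (rfl | ⟨u, rfl⟩)
      · exact Or.inr ⟨s, hs⟩
      · exact Or.inr ⟨u * s, by rw [hs, ← mul_assoc]⟩
    · rintro (rfl | ⟨u, rfl⟩)
      · exact Or.inr ⟨t, ht⟩
      · exact Or.inr ⟨u * t, by rw [ht, ← mul_assoc]⟩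

lemma greenR_iff {inv : S → S} (hcr1 : ∀ a : S, a * inv a * a = a) {a b : S} :
    greenR a b ↔ (∃ s, a = b * s) ∧ (∃ t, b = a * t) := by
  constructor
  · intro h
    have hb : b ∈ (insert a {x | ∃ s : S, x = a * s} : Set S) := by
      rw [h]; exact Set.mem_insert _ _
    have ha : a ∈ (insert b {x | ∃ s : S, x = b * s} : Set S) := by
      rw [← h]; exact Set.mem_insert _ _
    constructor
    · rcases Set.mem_insert_iff.mp ha with h' | h'
      · refine ⟨inv a * a, ?_⟩
        rw [← h', ← mul_assoc]; exact (hcr1 a).symm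
      · exact h'
    · rcases Set.mem_insert_iff.mp hb with h' | h'
      · refine ⟨inv b * b, ?_⟩
        rw [← h', ← mul_assoc]; exact (hcr1 b).symm
      · exact h'
  · rintro ⟨⟨s, hs⟩, ⟨t, ht⟩⟩
    unfold greenR
    ext x
    simp only [Set.mem_insert_iff, Set.mem_setOf_eq]
    constructor
    · rintro (rfl | ⟨u, rfl⟩)
      · exact Or.inr ⟨s, hs⟩
      · exact Or.inr ⟨s * u, by rw [hs, mul_assoc]⟩
    · rintro (rfl | ⟨u, rfl⟩)
      · exact Or.inr ⟨t, ht⟩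
      · exact Or.inr ⟨t * u, by rw [ht, mul_assoc]⟩

/-- Core lemma: if `f` is idempotent, `z*f = z` and `f ∈ SzS`, then `f ∈ Sz`. -/
lemma core1 {inv : S → S} (hcr1 : ∀ a : S, a * inv a * a = a)
    (hcr3 : ∀ a : S, a * inv a = inv a * a) {f z p q : S}
    (hf : f * f = f) (hzf : z * f = z) (hpq : f = p * z * q) :
    ∃ t, f = t * z := by
  have h3 : f = f * f * f := by rw [hf, hf]
  have hfw : f = (f * p * z) * (q * f) := by
    calc f = f * f * f := h3
      _ = f * (p * z * q) * f := by rw [← hpq]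
      _ = (f * p * z) * (q * f) := by simp only [mul_assoc]
  have hwf : (f * p * z) * f = f * p * z := by rw [mul_assoc, hzf]
  have hgf : (inv (f * p * z) * (f * p * z)) * f = inv (f * p * z) * (f * p * z) := by
    rw [mul_assoc, hwf]
  have hfg : f = inv (f * p * z) * (f * p * z) := by
    calc f = (f * p * z) * (q * f) := hfw
      _ = (inv (f * p * z) * (f * p * z) * (f * p * z)) * (q * f) := by
          rw [cr_sq' hcr1 hcr3 (f * p * z)]
      _ = (inv (f * p * z) * (f * p * z)) * ((f * p * z) * (q * f)) := by
          simp only [mul_assoc]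
      _ = (inv (f * p * z) * (f * p * z)) * f := by rw [← hfw]
      _ = inv (f * p * z) * (f * p * z) := hgf
  exact ⟨inv (f * p * z) * (f * p), by
    calc f = inv (f * p * z) * (f * p * z) := hfg
      _ = (inv (f * p * z) * (f * p)) * z := by simp only [mul_assoc]⟩

/-- Mirror core lemma: if `f` is idempotent, `f*z = z` and `f ∈ SzS`, then `f ∈ zS`. -/
lemma core2 {inv : S → S} (hcr1 : ∀ a : S, a * inv a * a = a)
    (hcr3 : ∀ a : S, a * inv a = inv a * a) {f z p q : S}
    (hf : f * f = f) (hfz : f * z = z) (hpq : f = p * z * q) :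
    ∃ t, f = z * t := by
  have h3 : f = f * f * f := by rw [hf, hf]
  have hfw : f = (f * p) * (z * q * f) := by
    calc f = f * f * f := h3
      _ = f * (p * z * q) * f := by rw [← hpq]
      _ = (f * p) * (z * q * f) := by simp only [mul_assoc]
  have hfw2 : f * (z * q * f) = z * q * f := by
    calc f * (z * q * f) = (f * z) * q * f := by simp only [mul_assoc]
      _ = z * q * f := by rw [hfz]
  have hwg : (z * q * f) * ((z * q * f) * inv (z * q * f)) = z * q * f := by
    rw [← mul_assoc]; exact cr_sq hcr1 hcr3 _
  have hfg2 : f * ((z * q * f) * inv (z * q * f)) = (z * q * f) * inv (z * q * f) := by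
    rw [← mul_assoc, hfw2]
  have hfg : f = (z * q * f) * inv (z * q * f) := by
    calc f = (f * p) * (z * q * f) := hfw
      _ = (f * p) * ((z * q * f) * ((z * q * f) * inv (z * q * f))) := by rw [hwg]
      _ = ((f * p) * (z * q * f)) * ((z * q * f) * inv (z * q * f)) := by
          simp only [mul_assoc]
      _ = f * ((z * q * f) * inv (z * q * f)) := by rw [← hfw]
      _ = (z * q * f) * inv (z * q * f) := hfg2
  exact ⟨q * f * inv (z * q * f), by
    calc f = (z * q * f) * inv (z * q * f) := hfg
      _ = z * (q * f * inv (z * q * f)) := by simp only [mul_assoc]⟩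

/-- Any two elements of a 𝒟-class are mutually in `S ⬝ x ⬝ S`. -/
lemma Dfact {inv : S → S} (hcr1 : ∀ a : S, a * inv a * a = a) {D : Set S}
    (hDclass : ∃ a : S, D = {b : S | greenD a b}) {x y : S}
    (hx : x ∈ D) (hy : y ∈ D) : ∃ p q, y = p * x * q := by
  obtain ⟨a, rfl⟩ := hDclass
  simp only [Set.mem_setOf_eq] at hx hy
  obtain ⟨c, hLc, hRc⟩ := hx
  obtain ⟨c2, hLc2, hRc2⟩ := hy
  obtain ⟨⟨s1, hs1⟩, -⟩ := (greenL_iff hcr1).mp hLc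
  obtain ⟨⟨u1, hu1⟩, -⟩ := (greenR_iff hcr1).mp hRc
  obtain ⟨-, ⟨t2, ht2⟩⟩ := (greenL_iff hcr1).mp hLc2
  obtain ⟨-, ⟨v2, hv2⟩⟩ := (greenR_iff hcr1).mp hRc2
  refine ⟨t2 * s1, u1 * v2, ?_⟩
  rw [hv2, ht2, hs1, hu1]
  simp only [mul_assoc]

end aux

theorem stmt11 {S : Type*} [Semigroup S] (inv : S → S)
    (hcr1 : ∀ a : S, a * inv a * a = a)
    (hcr2 : ∀ a : S, inv (inv a) = a)
    (hcr3 : ∀ a : S, a * inv a = inv a * a)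
    (D : Set S)
    -- `D` is a 𝒟-class of `S`
    (hDclass : ∃ a : S, D = {b : S | greenD a b})
    -- that is an ideal of `S`
    (hIdeal : ∀ s : S, ∀ d ∈ D, s * d ∈ D ∧ d * s ∈ D)
    (ρH ρL ρR : S → S → Prop)
    (hρH : ∀ a b : S, ρH a b ↔ (a = b ∨ (a ∈ D ∧ b ∈ D ∧ greenH a b)))
    (hρL : ∀ a b : S, ρL a b ↔ (a = b ∨ (a ∈ D ∧ b ∈ D ∧ greenL a b)))
    (hρR : ∀ a b : S, ρR a b ↔ (a = b ∨ (a ∈ D ∧ b ∈ D ∧ greenR a b))) :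
    -- ρ_𝓗 is a congruence contained in 𝓗
    (Equivalence ρH ∧ (∀ a b c d : S, ρH a b → ρH c d → ρH (a * c) (b * d)) ∧
      ∀ a b : S, ρH a b → greenH a b) ∧
    -- ρ_𝓛 is a congruence contained in 𝓛
    (Equivalence ρL ∧ (∀ a b c d : S, ρL a b → ρL c d → ρL (a * c) (b * d)) ∧
      ∀ a b : S, ρL a b → greenL a b) ∧
    -- ρ_ℛ is a congruence contained in ℛ
    (Equivalence ρR ∧ (∀ a b c d : S, ρR a b → ρR c d → ρR (a * c) (b * d)) ∧
      ∀ a b : S, ρR a b → greenR a b) ∧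
    -- the ρ_𝓗-classes in D form a rectangular band, the ρ_𝓛-classes in D a
    -- right zero semigroup, and the ρ_ℛ-classes in D a left zero semigroup
    (∀ d ∈ D, ∀ e ∈ D,
      ρH (d * d) d ∧ ρH (d * e * d) d ∧ ρL (d * e) e ∧ ρR (d * e) d) := by
  have hsq : ∀ s : S, s * s * inv s = s := cr_sq hcr1 hcr3
  have hsq' : ∀ s : S, inv s * s * s = s := cr_sq' hcr1 hcr3
  have hidem : ∀ c : S, (c * inv c) * (c * inv c) = c * inv c := by
    intro c
    calc (c * inv c) * (c * inv c) = (c * inv c * c) * inv c := by simp only [mul_assoc]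
      _ = c * inv c := by rw [hcr1]
  -- key lemma L: for x, y in D, y = t * (x * y) for some t
  have keyL : ∀ x ∈ D, ∀ y ∈ D, ∃ t : S, y = t * (x * y) := by
    intro x hx y hy
    have hzD : x * y ∈ D := (hIdeal x y hy).1
    have hfD' : y * inv y ∈ D := (hIdeal (inv y) y hy).2
    have hf : (y * inv y) * (y * inv y) = y * inv y := hidem y
    have hyf : y * (y * inv y) = y := by rw [← mul_assoc]; exact hsq y
    have hzf : (x * y) * (y * inv y) = x * y := by rw [mul_assoc, hyf]
    obtain ⟨p, q, hpq⟩ := Dfact hcr1 hDclass hzD hfD'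
    obtain ⟨t, ht⟩ := core1 hcr1 hcr3 hf hzf hpq
    refine ⟨y * t, ?_⟩
    calc y = y * (y * inv y) := hyf.symm
      _ = y * (t * (x * y)) := by rw [ht]
      _ = (y * t) * (x * y) := (mul_assoc _ _ _).symm
  -- key lemma R: for x, y in D, x = (x * y) * t for some t
  have keyR : ∀ x ∈ D, ∀ y ∈ D, ∃ t : S, x = (x * y) * t := by
    intro x hx y hy
    have hzD : x * y ∈ D := (hIdeal x y hy).1
    have hfD' : x * inv x ∈ D := (hIdeal (inv x) x hx).2
    have hf := hidem x
    have hfx : (x * inv x) * x = x := hcr1 x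
    have hfz : (x * inv x) * (x * y) = x * y := by rw [← mul_assoc, hfx]
    obtain ⟨p, q, hpq⟩ := Dfact hcr1 hDclass hzD hfD'
    obtain ⟨t, ht⟩ := core2 hcr1 hcr3 hf hfz hpq
    refine ⟨t * x, ?_⟩
    calc x = (x * inv x) * x := hfx.symm
      _ = ((x * y) * t) * x := by rw [ht]
      _ = (x * y) * (t * x) := mul_assoc _ _ _
  -- s * c is L-equivalent to c, for c in D
  have XL : ∀ s : S, ∀ c ∈ D, greenL (s * c) c := by
    intro s c hc
    have hzD : s * c ∈ D := (hIdeal s c hc).1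
    have hfD' : c * inv c ∈ D := (hIdeal (inv c) c hc).2
    have hf := hidem c
    have hcf : c * (c * inv c) = c := by rw [← mul_assoc]; exact hsq c
    have hzf : (s * c) * (c * inv c) = s * c := by rw [mul_assoc, hcf]
    obtain ⟨p, q, hpq⟩ := Dfact hcr1 hDclass hzD hfD'
    obtain ⟨t, ht⟩ := core1 hcr1 hcr3 hf hzf hpq
    refine (greenL_iff hcr1).mpr ⟨⟨s, rfl⟩, ⟨c * t, ?_⟩⟩
    calc c = c * (c * inv c) := hcf.symm
      _ = c * (t * (s * c)) := by rw [ht]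
      _ = (c * t) * (s * c) := (mul_assoc _ _ _).symm
  -- c * s is R-equivalent to c, for c in D
  have XR : ∀ s : S, ∀ c ∈ D, greenR (c * s) c := by
    intro s c hc
    have hzD : c * s ∈ D := (hIdeal s c hc).2
    have hfD' : c * inv c ∈ D := (hIdeal (inv c) c hc).2
    have hf := hidem c
    have hfc : (c * inv c) * c = c := hcr1 c
    have hfz : (c * inv c) * (c * s) = c * s := by rw [← mul_assoc, hfc]
    obtain ⟨p, q, hpq⟩ := Dfact hcr1 hDclass hzD hfD'
    obtain ⟨t, ht⟩ := core2 hcr1 hcr3 hf hfz hpq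
    refine (greenR_iff hcr1).mpr ⟨⟨s, rfl⟩, ⟨t * c, ?_⟩⟩
    calc c = (c * inv c) * c := hfc.symm
      _ = ((c * s) * t) * c := by rw [ht]
      _ = (c * s) * (t * c) := mul_assoc _ _ _
  -- L is a right congruence, R is a left congruence
  have rightL : ∀ a b c : S, greenL a b → greenL (a * c) (b * c) := by
    intro a b c h
    obtain ⟨⟨s, hs⟩, ⟨t, ht⟩⟩ := (greenL_iff hcr1).mp h
    exact (greenL_iff hcr1).mpr
      ⟨⟨s, by rw [hs, mul_assoc]⟩, ⟨t, by rw [ht, mul_assoc]⟩⟩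
  have leftR : ∀ a b c : S, greenR a b → greenR (c * a) (c * b) := by
    intro a b c h
    obtain ⟨⟨s, hs⟩, ⟨t, ht⟩⟩ := (greenR_iff hcr1).mp h
    exact (greenR_iff hcr1).mpr
      ⟨⟨s, by rw [hs, mul_assoc]⟩, ⟨t, by rw [ht, mul_assoc]⟩⟩
  -- the three congruence statements
  have equivL : Equivalence ρL := by
    constructor
    · intro a; exact (hρL a a).mpr (Or.inl rfl)
    · intro a b h
      rcases (hρL a b).mp h with rfl | ⟨ha, hb, hab⟩
      · exact h
      · exact (hρL b a).mpr (Or.inr ⟨hb, ha, greenL_symm hab⟩)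
    · intro a b c h1 h2
      rcases (hρL a b).mp h1 with rfl | ⟨ha, hb, hab⟩
      · exact h2
      · rcases (hρL b c).mp h2 with rfl | ⟨hb', hc, hbc⟩
        · exact h1
        · exact (hρL a c).mpr (Or.inr ⟨ha, hc, greenL_trans hab hbc⟩)
  have compatL : ∀ a b c d : S, ρL a b → ρL c d → ρL (a * c) (b * d) := by
    intro a b c d h1 h2
    rcases (hρL a b).mp h1 with rfl | ⟨ha, hb, hab⟩
    · rcases (hρL c d).mp h2 with rfl | ⟨hc, hd, hcd⟩
      · exact (hρL _ _).mpr (Or.inl rfl)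
      · exact (hρL _ _).mpr (Or.inr ⟨(hIdeal a c hc).1, (hIdeal a d hd).1,
          greenL_trans (XL a c hc) (greenL_trans hcd (greenL_symm (XL a d hd)))⟩)
    · rcases (hρL c d).mp h2 with rfl | ⟨hc, hd, hcd⟩
      · exact (hρL _ _).mpr (Or.inr ⟨(hIdeal c a ha).2, (hIdeal c b hb).2,
          rightL a b c hab⟩)
      · exact (hρL _ _).mpr (Or.inr ⟨(hIdeal a c hc).1, (hIdeal b d hd).1,
          greenL_trans (XL a c hc) (greenL_trans hcd (greenL_symm (XL b d hd)))⟩)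
  have containL : ∀ a b : S, ρL a b → greenL a b := by
    intro a b h
    rcases (hρL a b).mp h with rfl | ⟨-, -, hab⟩
    · rfl
    · exact hab
  have equivR : Equivalence ρR := by
    constructor
    · intro a; exact (hρR a a).mpr (Or.inl rfl)
    · intro a b h
      rcases (hρR a b).mp h with rfl | ⟨ha, hb, hab⟩
      · exact h
      · exact (hρR b a).mpr (Or.inr ⟨hb, ha, greenR_symm hab⟩)
    · intro a b c h1 h2
      rcases (hρR a b).mp h1 with rfl | ⟨ha, hb, hab⟩
      · exact h2
      · rcases (hρR b c).mp h2 with rfl | ⟨hb', hc, hbc⟩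
        · exact h1
        · exact (hρR a c).mpr (Or.inr ⟨ha, hc, greenR_trans hab hbc⟩)
  have compatR : ∀ a b c d : S, ρR a b → ρR c d → ρR (a * c) (b * d) := by
    intro a b c d h1 h2
    rcases (hρR a b).mp h1 with rfl | ⟨ha, hb, hab⟩
    · rcases (hρR c d).mp h2 with rfl | ⟨hc, hd, hcd⟩
      · exact (hρR _ _).mpr (Or.inl rfl)
      · exact (hρR _ _).mpr (Or.inr ⟨(hIdeal a c hc).1, (hIdeal a d hd).1,
          leftR c d a hcd⟩)
    · rcases (hρR c d).mp h2 with rfl | ⟨hc, hd, hcd⟩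
      · exact (hρR _ _).mpr (Or.inr ⟨(hIdeal c a ha).2, (hIdeal c b hb).2,
          greenR_trans (XR c a ha) (greenR_trans hab (greenR_symm (XR c b hb)))⟩)
      · exact (hρR _ _).mpr (Or.inr ⟨(hIdeal c a ha).2, (hIdeal d b hb).2,
          greenR_trans (XR c a ha) (greenR_trans hab (greenR_symm (XR d b hb)))⟩)
  have containR : ∀ a b : S, ρR a b → greenR a b := by
    intro a b h
    rcases (hρR a b).mp h with rfl | ⟨-, -, hab⟩
    · rfl
    · exact hab
  have equivH : Equivalence ρH := by
    constructor
    · intro a; exact (hρH a a).mpr (Or.inl rfl)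
    · intro a b h
      rcases (hρH a b).mp h with rfl | ⟨ha, hb, hab⟩
      · exact h
      · obtain ⟨h1, h2⟩ := hab
        exact (hρH b a).mpr (Or.inr ⟨hb, ha, greenL_symm h1, greenR_symm h2⟩)
    · intro a b c h1 h2
      rcases (hρH a b).mp h1 with rfl | ⟨ha, hb, hab⟩
      · exact h2
      · rcases (hρH b c).mp h2 with rfl | ⟨hb', hc, hbc⟩
        · exact h1
        · obtain ⟨hab1, hab2⟩ := hab
          obtain ⟨hbc1, hbc2⟩ := hbc
          exact (hρH a c).mpr (Or.inr ⟨ha, hc, greenL_trans hab1 hbc1,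
            greenR_trans hab2 hbc2⟩)
  have compatH : ∀ a b c d : S, ρH a b → ρH c d → ρH (a * c) (b * d) := by
    intro a b c d h1 h2
    rcases (hρH a b).mp h1 with rfl | ⟨ha, hb, hab⟩
    · rcases (hρH c d).mp h2 with rfl | ⟨hc, hd, hcd⟩
      · exact (hρH _ _).mpr (Or.inl rfl)
      · obtain ⟨hcd1, hcd2⟩ := hcd
        exact (hρH _ _).mpr (Or.inr ⟨(hIdeal a c hc).1, (hIdeal a d hd).1,
          greenL_trans (XL a c hc) (greenL_trans hcd1 (greenL_symm (XL a d hd))),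
          leftR c d a hcd2⟩)
    · obtain ⟨hab1, hab2⟩ := hab
      rcases (hρH c d).mp h2 with rfl | ⟨hc, hd, hcd⟩
      · exact (hρH _ _).mpr (Or.inr ⟨(hIdeal c a ha).2, (hIdeal c b hb).2,
          rightL a b c hab1,
          greenR_trans (XR c a ha) (greenR_trans hab2 (greenR_symm (XR c b hb)))⟩)
      · obtain ⟨hcd1, hcd2⟩ := hcd
        exact (hρH _ _).mpr (Or.inr ⟨(hIdeal a c hc).1, (hIdeal b d hd).1,
          greenL_trans (XL a c hc) (greenL_trans hcd1 (greenL_symm (XL b d hd))),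
          greenR_trans (XR c a ha) (greenR_trans hab2 (greenR_symm (XR d b hb)))⟩)
  have containH : ∀ a b : S, ρH a b → greenH a b := by
    intro a b h
    rcases (hρH a b).mp h with rfl | ⟨-, -, hab⟩
    · exact ⟨rfl, rfl⟩
    · exact hab
  have final : ∀ d ∈ D, ∀ e ∈ D,
      ρH (d * d) d ∧ ρH (d * e * d) d ∧ ρL (d * e) e ∧ ρR (d * e) d := by
    intro d hd e he
    have hdd : d * d ∈ D := (hIdeal d d hd).1
    have hde : d * e ∈ D := (hIdeal d e he).1
    have hed : e * d ∈ D := (hIdeal d e he).2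
    have hded : d * e * d ∈ D := (hIdeal d (d * e) hde).2
    refine ⟨?_, ?_, ?_, ?_⟩
    · exact (hρH _ _).mpr (Or.inr ⟨hdd, hd,
        (greenL_iff hcr1).mpr ⟨⟨d, rfl⟩,
          ⟨inv d, by rw [← mul_assoc]; exact (hsq' d).symm⟩⟩,
        (greenR_iff hcr1).mpr ⟨⟨d, rfl⟩, ⟨inv d, (hsq d).symm⟩⟩⟩)
    · obtain ⟨t1, ht1⟩ := keyL (d * e) hde d hd
      obtain ⟨t2, ht2⟩ := keyR d hd (e * d) hed
      rw [← mul_assoc] at ht2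
      exact (hρH _ _).mpr (Or.inr ⟨hded, hd,
        (greenL_iff hcr1).mpr ⟨⟨d * e, rfl⟩, ⟨t1, ht1⟩⟩,
        (greenR_iff hcr1).mpr ⟨⟨e * d, mul_assoc d e d⟩, ⟨t2, ht2⟩⟩⟩)
    · obtain ⟨t, ht⟩ := keyL d hd e he
      exact (hρL _ _).mpr (Or.inr ⟨hde, he,
        (greenL_iff hcr1).mpr ⟨⟨d, rfl⟩, ⟨t, ht⟩⟩⟩)
    · obtain ⟨t, ht⟩ := keyR d hd e he
      exact (hρR _ _).mpr (Or.inr ⟨hde, hd,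
        (greenR_iff hcr1).mpr ⟨⟨e, rfl⟩, ⟨t, ht⟩⟩⟩)
  exact ⟨⟨equivH, compatH, containH⟩, ⟨equivL, compatL, containL⟩,
    ⟨equivR, compatR, containR⟩, final⟩
end

section
/- Let S be a completely regular semigroup generated as a unary semigroup by a finite subset A ⊆ S (that is, the least subset of S containing A and closed under multiplication and the unary operation is S itself). Then Green's relation 𝒟 on S has only finitely many equivalence classes. -/
/-- In a completely regular semigroup this is the 𝒥-preorder, since there every `a` lies in
`S a S`. -/
def JLe {S : Type*} [Semigroup S] (a b : S) : Prop := ∃ x y : S, a = x * b * y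

theorem JLe.trans {S : Type*} [Semigroup S] {a b c : S} :
    JLe a b → JLe b c → JLe a c := by
  rintro ⟨x, y, rfl⟩ ⟨u, v, rfl⟩
  exact ⟨x * u, v * y, by simp only [mul_assoc]⟩

theorem greenL_of_exists {S : Type*} [Semigroup S] {a b : S}
    (hab : ∃ s, a = s * b) (hba : ∃ s, b = s * a) : greenL a b := by
  obtain ⟨s, hs⟩ := hab
  obtain ⟨t, ht⟩ := hba
  ext z
  simp only [Set.mem_insert_iff, Set.mem_ofPred_eq]
  constructor
  · rintro (rfl | ⟨r, rfl⟩)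
    exacts [Or.inr ⟨s, hs⟩, Or.inr ⟨r * s, by rw [hs, mul_assoc]⟩]
  · rintro (rfl | ⟨r, rfl⟩)
    exacts [Or.inr ⟨t, ht⟩, Or.inr ⟨r * t, by rw [ht, mul_assoc]⟩]

theorem greenR_of_exists {S : Type*} [Semigroup S] {a b : S}
    (hab : ∃ s, a = b * s) (hba : ∃ s, b = a * s) : greenR a b := by
  obtain ⟨s, hs⟩ := hab
  obtain ⟨t, ht⟩ := hba
  ext z
  simp only [Set.mem_insert_iff, Set.mem_ofPred_eq]
  constructor
  · rintro (rfl | ⟨r, rfl⟩)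
    exacts [Or.inr ⟨s, hs⟩, Or.inr ⟨s * r, by rw [hs, mul_assoc]⟩]
  · rintro (rfl | ⟨r, rfl⟩)
    exacts [Or.inr ⟨t, ht⟩, Or.inr ⟨t * r, by rw [ht, mul_assoc]⟩]

def IsUnaryGeneratingSet {S : Type*} [Semigroup S] (inv : S → S) (A : Set S) : Prop :=
  ∀ T : Set S, A ⊆ T → (∀ a ∈ T, ∀ b ∈ T, a * b ∈ T) → (∀ a ∈ T, inv a ∈ T) →
    ∀ s : S, s ∈ T

structure IsCompletelyRegular_s16 {S : Type*} [Semigroup S] (inv : S → S) : Prop where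
  mul_inv_mul : ∀ a, a * inv a * a = a
  inv_inv : ∀ a, inv (inv a) = a
  mul_inv_comm : ∀ a, a * inv a = inv a * a

namespace IsCompletelyRegular_s16

variable {S : Type*} [Semigroup S] {inv : S → S} (h : IsCompletelyRegular_s16 inv)
include h

theorem inv_mul_inv (a : S) : inv a * a * inv a = inv a := by
  simpa only [h.inv_inv] using h.mul_inv_mul (inv a)

theorem inv_mul_mul_self (a : S) : inv a * a * a = a := by
  rw [← h.mul_inv_comm, h.mul_inv_mul]

theorem mul_self_mul_inv (a : S) : a * a * inv a = a := by
  rw [mul_assoc, h.mul_inv_comm, ← mul_assoc, h.mul_inv_mul]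

theorem inv_mul_inv_mul_cube (a : S) : inv a * inv a * (a * a * a) = a := by
  calc inv a * inv a * (a * a * a) = inv a * (inv a * a * a) * a := by simp only [mul_assoc]
    _ = a := by rw [h.inv_mul_mul_self, h.inv_mul_mul_self]

theorem jle_refl (a : S) : JLe a a :=
  ⟨a * inv a, inv a * a, by rw [← mul_assoc, h.mul_inv_mul, h.mul_inv_mul]⟩

theorem jle_inv (a : S) : JLe a (inv a) := ⟨a, a, (h.mul_inv_mul a).symm⟩

theorem inv_jle (a : S) : JLe (inv a) a := ⟨inv a, inv a, (h.inv_mul_inv a).symm⟩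

theorem mul_jle_left (a b : S) : JLe (a * b) a :=
  ⟨a * inv a, b, by rw [h.mul_inv_mul]⟩

theorem mul_jle_right (a b : S) : JLe (a * b) b :=
  ⟨a, inv b * b, by rw [mul_assoc a, ← mul_assoc b, h.mul_inv_mul]⟩

theorem jle_of_cube_eq {a b x y : S} (hab : a * a * a = x * b * y) : JLe a b :=
  ⟨inv a * inv a * x, y, by
    calc a = inv a * inv a * (a * a * a) := (h.inv_mul_inv_mul_cube a).symm
      _ = inv a * inv a * x * b * y := by rw [hab]; simp only [mul_assoc]⟩

theorem mul_jle_mul_comm (x y : S) : JLe (y * x) (x * y) :=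
  h.jle_of_cube_eq (x := y) (y := x * (y * x)) (by simp only [mul_assoc])

theorem jle_mul {x y z : S} (hx : JLe z x) (hy : JLe z y) : JLe z (x * y) := by
  obtain ⟨p, q, hx⟩ := hx
  obtain ⟨p', q', hy⟩ := hy
  set u := x * (q * p') * y
  have hz_u : JLe z u := ⟨inv z * p, q', by
    calc z = inv z * z * z := (h.inv_mul_mul_self z).symm
      _ = inv z * (p * x * q) * (p' * y * q') := by rw [← hx, ← hy]
      _ = inv z * p * u * q' := by simp only [u, mul_assoc]⟩
  have hu : JLe u (y * x) :=
    h.jle_of_cube_eq (x := x * (q * p')) (y := q * p' * y * u) (by simp only [u, mul_assoc])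
  exact hz_u.trans (hu.trans (h.mul_jle_mul_comm x y))

theorem inv_mul_mul_eq_of_eq {a p q : S} (ha : a = p * a * q) : inv p * p * a = a := by
  calc inv p * p * a = inv p * p * (p * a * q) := by rw [← ha]
    _ = inv p * p * p * a * q := by simp only [mul_assoc]
    _ = a := by rw [h.inv_mul_mul_self, ← ha]

theorem mul_mul_inv_eq_of_eq {a p q : S} (ha : a = p * a * q) : a * q * inv q = a := by
  calc a * q * inv q = p * a * q * q * inv q := by rw [← ha]
    _ = p * a * (q * q * inv q) := by simp only [mul_assoc]
    _ = a := by rw [h.mul_self_mul_inv, ← ha]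

theorem exists_eq_mul_of_greenL {a b : S} (hab : greenL a b) : ∃ s, a = s * b := by
  have : a ∈ insert b {x | ∃ s, x = s * b} := hab ▸ Set.mem_insert a _
  rcases this with rfl | hs
  exacts [⟨a * inv a, (h.mul_inv_mul a).symm⟩, hs]

theorem exists_eq_mul_of_greenR {a b : S} (hab : greenR a b) : ∃ s, a = b * s := by
  have : a ∈ insert b {x | ∃ s, x = b * s} := hab ▸ Set.mem_insert a _
  rcases this with rfl | hs
  exacts [⟨inv a * a, by rw [← mul_assoc, h.mul_inv_mul]⟩, hs]

theorem greenD_of_jle {a b : S} (hab : JLe a b) (hba : JLe b a) : greenD a b := by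
  obtain ⟨x, y, hab⟩ := hab
  obtain ⟨u, v, hba⟩ := hba
  have ha : a = (x * u) * a * (v * y) := by
    calc a = x * (u * a * v) * y := by rw [← hba, hab]
      _ = (x * u) * a * (v * y) := by simp only [mul_assoc]
  refine ⟨u * a, greenL_of_exists ⟨inv (x * u) * x, ?_⟩ ⟨u, rfl⟩,
    greenR_of_exists ⟨y * inv (v * y), ?_⟩ ⟨v, hba⟩⟩
  · calc a = inv (x * u) * (x * u) * a := (h.inv_mul_mul_eq_of_eq ha).symm
      _ = inv (x * u) * x * (u * a) := by simp only [mul_assoc]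
  · calc u * a = u * (a * (v * y) * inv (v * y)) := by rw [h.mul_mul_inv_eq_of_eq ha]
      _ = u * a * v * (y * inv (v * y)) := by simp only [mul_assoc]
      _ = b * (y * inv (v * y)) := by rw [← hba]

theorem greenD_iff_jle {a b : S} : greenD a b ↔ JLe a b ∧ JLe b a := by
  refine ⟨fun ⟨c, hL, hR⟩ => ?_, fun hab => h.greenD_of_jle hab.1 hab.2⟩
  obtain ⟨s, hs⟩ := h.exists_eq_mul_of_greenL hL
  obtain ⟨s', hs'⟩ := h.exists_eq_mul_of_greenR hR
  obtain ⟨t, ht⟩ := h.exists_eq_mul_of_greenL (a := c) (b := a) hL.symm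
  obtain ⟨t', ht'⟩ := h.exists_eq_mul_of_greenR (a := b) (b := c) hR.symm
  exact ⟨⟨s, s', by rw [hs, hs', mul_assoc]⟩, ⟨t, t', by rw [ht', ht]⟩⟩

theorem jle_of_forall_generator {A : Set S}
    (hgen : IsUnaryGeneratingSet inv A)
    {s b : S} (hb : ∀ x ∈ A, JLe s x → JLe b x) : JLe b s := by
  refine hgen {s | ∀ b, (∀ x ∈ A, JLe s x → JLe b x) → JLe b s} ?_ ?_ ?_ s b hb
  · exact fun a ha b hb => hb a ha (h.jle_refl a)
  · intro s hs t ht b hb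
    exact h.jle_mul (hs b fun x hx hsx => hb x hx ((h.mul_jle_left s t).trans hsx))
      (ht b fun x hx htx => hb x hx ((h.mul_jle_right s t).trans htx))
  · intro s hs b hb
    exact (hs b fun x hx hsx => hb x hx ((h.inv_jle s).trans hsx)).trans (h.jle_inv s)

theorem greenD_iff_generators_above_eq {A : Set S}
    (hgen : IsUnaryGeneratingSet inv A)
    {a b : S} : greenD a b ↔ {x ∈ A | JLe a x} = {x ∈ A | JLe b x} := by
  rw [h.greenD_iff_jle]
  refine ⟨fun ⟨hab, hba⟩ => ?_, fun hA => ⟨?_, ?_⟩⟩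
  · ext x
    exact and_congr_right fun _ => ⟨hba.trans, hab.trans⟩
  · exact h.jle_of_forall_generator hgen fun x hx hbx =>
      (hA ▸ ⟨hx, hbx⟩ : x ∈ {x ∈ A | JLe a x}).2
  · exact h.jle_of_forall_generator hgen fun x hx hax =>
      (hA ▸ ⟨hx, hax⟩ : x ∈ {x ∈ A | JLe b x}).2

theorem finite_range_greenD_classes {A : Set S} (hA : A.Finite)
    (hgen : IsUnaryGeneratingSet inv A) :
    (Set.range fun a : S => {b : S | greenD a b}).Finite := by
  have hclasses : (fun a : S => {b : S | greenD a b}) =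
      (fun B => {b | {x ∈ A | JLe b x} = B}) ∘ fun a => {x ∈ A | JLe a x} :=
    funext fun a => Set.ext fun b => (h.greenD_iff_generators_above_eq hgen).trans eq_comm
  rw [hclasses, Set.range_comp]
  refine ((hA.finite_subsets).subset ?_).image _
  rintro _ ⟨a, rfl⟩
  exact Set.sep_subset A _

end IsCompletelyRegular_s16

/-- A completely regular semigroup generated as a unary semigroup by a finite
set has only finitely many 𝒟-classes. -/
theorem stmt16 {S : Type*} [Semigroup S] (inv : S → S)
    (hcr1 : ∀ a : S, a * inv a * a = a)
    (hcr2 : ∀ a : S, inv (inv a) = a)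
    (hcr3 : ∀ a : S, a * inv a = inv a * a)
    (A : Finset S)
    (hgen : ∀ T : Set S, (↑A : Set S) ⊆ T →
      (∀ a ∈ T, ∀ b ∈ T, a * b ∈ T) → (∀ a ∈ T, inv a ∈ T) →
      ∀ s : S, s ∈ T) :
    Set.Finite (Set.range fun a : S => {b : S | greenD a b}) :=
  IsCompletelyRegular_s16.finite_range_greenD_classes ⟨hcr1, hcr2, hcr3⟩ A.finite_toSet hgen
end
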